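/- Let K : ℝ → ℝ be a symmetric density supported on [-1,1] with zero first moment, and let f ∈ C²(ℝ) be a density supported on [a, ∞) with bounded second derivative. For x = a + c·h with c ∈ [0,1) fixed, the expected value of the KDE satisfies E[(1/h)K((x-X)/h)] = f(x)·F_K(c) - h·f'(x)·μ₁⁻(K;c) + O(h²) as h → 0, where F_K(c) = ∫_{-1}^{c} K(t)dt and μ₁⁻(K;c) = ∫_{-1}^{c} t·K(t)dt; in particular when F_K(c) < 1 the bias E[(1/h)K((x-X)/h)] - f(x) does not vanish as h → 0 unless f(x) = 0. -/

import Mathlib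

/-!
Substituting `u = x - h t` turns the expectation into `∫_{-1}^{c} K(t) f(x - h t) dt`: the
constraint `u > a` cuts the kernel's support at `t = c`. On that range `x - h t ≥ a`, so the
first-order Taylor expansion of `f` at `x` applies there, with remainder at most
`sup |f''| · (h t)² ≤ sup |f''| · h²`; integrating against `K` gives the `O(h²)` expansion.
Since `f(x) → f(a)` and `h f'(x) → 0`, the bias then tends to `f(a) (F_K(c) - 1)`, which is
nonzero when `F_K(c) < 1` and `f(a) ≠ 0`.
-/

open MeasureTheory Filter Asymptotics

open Set Topology

theorem abs_sub_sub_mul_le_of_hasDerivWithinAt {s : Set ℝ} (hs : Convex ℝ s)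
    {f f' f'' : ℝ → ℝ} {M : ℝ}
    (hf : ∀ x ∈ s, HasDerivWithinAt f (f' x) s x)
    (hf' : ∀ x ∈ s, HasDerivWithinAt f' (f'' x) s x)
    (hM : ∀ x ∈ s, |f'' x| ≤ M) {x y : ℝ} (hx : x ∈ s) (hy : y ∈ s) :
    |f y - f x - f' x * (y - x)| ≤ M * (y - x) ^ 2 := by
  have hM0 : 0 ≤ M := (abs_nonneg _).trans (hM x hx)
  have hseg : uIcc x y ⊆ s := hs.ordConnected.uIcc_subset hx hy
  have hg : ∀ z ∈ uIcc x y,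
      HasDerivWithinAt (fun z => f z - f' x * z) (f' z - f' x) (uIcc x y) z := fun z hz =>
    ((hf z (hseg hz)).sub (by simpa using (hasDerivWithinAt_id z s).const_mul (f' x))).mono hseg
  have hg' : ∀ z ∈ uIcc x y, ‖f' z - f' x‖ ≤ M * |y - x| := fun z hz =>
    (hs.norm_image_sub_le_of_norm_hasDerivWithin_le hf' hM hx
      (hseg hz)).trans (mul_le_mul_of_nonneg_left (abs_sub_left_of_mem_uIcc hz) hM0)
  have := (convex_uIcc x y).norm_image_sub_le_of_norm_hasDerivWithin_le hg hg'
    left_mem_uIcc right_mem_uIcc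
  rw [Real.norm_eq_abs, Real.norm_eq_abs] at this
  calc |f y - f x - f' x * (y - x)| = |f y - f' x * y - (f x - f' x * x)| := by ring_nf
    _ ≤ M * |y - x| * |y - x| := this
    _ = M * (y - x) ^ 2 := by rw [mul_assoc, ← sq, sq_abs]

theorem setIntegral_Ioi_kernel_eq (K g : ℝ → ℝ) {h : ℝ} (hh : 0 < h) (a x : ℝ) :
    ∫ u in Ioi a, (1 / h) * K ((x - u) / h) * g u =
      ∫ t in Iio ((x - a) / h), K t * g (x - h * t) := by
  set G := (Ioi a).indicator fun u => (1 / h) * K ((x - u) / h) * g u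
  have hG : ∀ t, (Iio ((x - a) / h)).indicator (fun t => K t * g (x - h * t)) t =
      h * G (x - h * t) := by
    intro t
    have hmem : x - h * t ∈ Ioi a ↔ t ∈ Iio ((x - a) / h) := by
      rw [mem_Ioi, mem_Iio, lt_div_iff₀ hh]; constructor <;> intro <;> linarith
    have hK : (x - (x - h * t)) / h = t := by field_simp; ring
    by_cases ht : t ∈ Iio ((x - a) / h)
    · simp only [G, indicator_of_mem ht, indicator_of_mem (hmem.2 ht), hK]
      field_simp
    · simp only [G, indicator_of_notMem ht, indicator_of_notMem (mt hmem.1 ht), mul_zero]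
  rw [← integral_indicator measurableSet_Ioi, ← integral_indicator measurableSet_Iio]
  simp_rw [hG]
  rw [integral_const_mul, Measure.integral_comp_mul_left (fun s => G (x - s)) h,
    integral_sub_left_eq_self G volume x, abs_of_pos (inv_pos.mpr hh), smul_eq_mul,
    mul_inv_cancel_left₀ hh.ne']

theorem abs_integral_mul_sub_linear_le {μ : Measure ℝ} {K φ : ℝ → ℝ} {A B C : ℝ}
    (hK : Integrable K μ) (htK : Integrable (fun t => t * K t) μ)
    (hKφ : Integrable (fun t => K t * φ t) μ) (hφ : ∀ᵐ t ∂μ, |φ t - A - B * t| ≤ C) :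
    |∫ t, K t * φ t ∂μ - A * ∫ t, K t ∂μ - B * ∫ t, t * K t ∂μ| ≤ C * ∫ t, |K t| ∂μ := by
  have hsplit : ∫ t, K t * φ t ∂μ - A * ∫ t, K t ∂μ - B * ∫ t, t * K t ∂μ =
      ∫ t, K t * (φ t - A - B * t) ∂μ := by
    rw [← integral_const_mul, ← integral_const_mul, ← integral_sub hKφ (hK.const_mul A),
      ← integral_sub (f := fun t => K t * φ t - A * K t) (hKφ.sub (hK.const_mul A))
        (htK.const_mul B)]
    congr 1; ext t; ring
  rw [hsplit, ← integral_const_mul, ← Real.norm_eq_abs]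
  refine norm_integral_le_of_norm_le (hK.norm.const_mul C) ?_
  filter_upwards [hφ] with t ht
  rw [norm_mul, Real.norm_eq_abs, Real.norm_eq_abs, mul_comm C]
  exact mul_le_mul_of_nonneg_left ht (abs_nonneg _)

section KernelDensity

variable {a c : ℝ} {K f f' f'' : ℝ → ℝ} {M : ℝ}

theorem setIntegral_Iio_eq_Icc_of_support (hK_supp : ∀ t, t ∉ Icc (-1 : ℝ) 1 → K t = 0)
    (φ : ℝ → ℝ) (c : ℝ) :
    ∫ t in Iio c, K t * φ t = ∫ t in Icc (-1) c, K t * φ t := by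
  rw [← integral_Iic_eq_integral_Iio]
  refine setIntegral_eq_of_subset_of_forall_sdiff_eq_zero measurableSet_Iic Icc_subset_Iic_self
    fun t ⟨htc, ht⟩ => ?_
  have : t < -1 := by by_contra! h; exact ht ⟨h, htc⟩
  rw [hK_supp t fun h => by linarith [h.1], zero_mul]

theorem kde_remainder_le (hc : c ∈ Ico 0 1) (hK_supp : ∀ t, t ∉ Icc (-1 : ℝ) 1 → K t = 0)
    (hK_int : Integrable K)
    (hf' : ∀ x ∈ Ici a, HasDerivWithinAt f (f' x) (Ici a) x)
    (hf'' : ∀ x ∈ Ici a, HasDerivWithinAt f' (f'' x) (Ici a) x)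
    (hM : ∀ x ∈ Ici a, |f x| ≤ M ∧ |f' x| ≤ M ∧ |f'' x| ≤ M) {h : ℝ} (hh : 0 < h) :
    |(∫ u in Ioi a, (1 / h) * K ((a + c * h - u) / h) * f u)
        - f (a + c * h) * (∫ t in Icc (-1) c, K t)
        + h * f' (a + c * h) * (∫ t in Icc (-1) c, t * K t)|
      ≤ M * (∫ t in Icc (-1) c, |K t|) * h ^ 2 := by
  set x := a + c * h
  have hx : x ∈ Ici a := by simp only [x, mem_Ici]; nlinarith [hc.1]
  have hxt : ∀ t ∈ Icc (-1 : ℝ) c, x - h * t ∈ Ici a := fun t ht => by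
    simp only [x, mem_Ici]; nlinarith [ht.2]
  have hcov : ∫ u in Ioi a, (1 / h) * K ((x - u) / h) * f u =
      ∫ t in Icc (-1) c, K t * f (x - h * t) := by
    rw [setIntegral_Ioi_kernel_eq K f hh, show (x - a) / h = c by field_simp; ring,
      setIntegral_Iio_eq_Icc_of_support hK_supp]
  have hfK : IntegrableOn (fun t => K t * f (x - h * t)) (Icc (-1) c) := by
    have hf_cont : ContinuousOn f (Ici a) := fun y hy => (hf' y hy).continuousWithinAt
    have hcont : ContinuousOn (fun t => f (x - h * t)) (Icc (-1) c) :=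
      hf_cont.comp (by fun_prop) hxt
    refine Integrable.mono' (hK_int.integrableOn.norm.const_mul M)
      (hK_int.aestronglyMeasurable.restrict.mul (hcont.aestronglyMeasurable measurableSet_Icc))
      (ae_restrict_of_forall_mem measurableSet_Icc fun t ht => ?_)
    rw [norm_mul, Real.norm_eq_abs, Real.norm_eq_abs, mul_comm M]
    exact mul_le_mul_of_nonneg_left (hM _ (hxt t ht)).1 (abs_nonneg _)
  have htK : IntegrableOn (fun t => t * K t) (Icc (-1) c) :=
    hK_int.integrableOn.continuousOn_mul continuousOn_id isCompact_Icc
  have hM0 : 0 ≤ M := (abs_nonneg _).trans (hM a self_mem_Ici).1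
  have htaylor : ∀ t ∈ Icc (-1 : ℝ) c,
      |f (x - h * t) - f x - -(h * f' x) * t| ≤ M * h ^ 2 := fun t ht => by
    have := abs_sub_sub_mul_le_of_hasDerivWithinAt (convex_Ici a) hf' hf''
      (fun y hy => (hM y hy).2.2) hx (hxt t ht)
    have ht2 : t ^ 2 ≤ 1 := by nlinarith [ht.1, ht.2, hc.2]
    calc |f (x - h * t) - f x - -(h * f' x) * t|
        = |f (x - h * t) - f x - f' x * (x - h * t - x)| := by ring_nf
      _ ≤ M * (x - h * t - x) ^ 2 := this
      _ = M * h ^ 2 * t ^ 2 := by ring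
      _ ≤ M * h ^ 2 := mul_le_of_le_one_right (by positivity) ht2
  have := abs_integral_mul_sub_linear_le hK_int.integrableOn htK hfK
    (ae_restrict_of_forall_mem measurableSet_Icc htaylor)
  rw [hcov, mul_right_comm M]
  convert this using 2
  ring

theorem kde_expansion_isBigO (hc : c ∈ Ico 0 1)
    (hK_supp : ∀ t, t ∉ Icc (-1 : ℝ) 1 → K t = 0) (hK_int : Integrable K)
    (hf' : ∀ x ∈ Ici a, HasDerivWithinAt f (f' x) (Ici a) x)
    (hf'' : ∀ x ∈ Ici a, HasDerivWithinAt f' (f'' x) (Ici a) x)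
    (hM : ∀ x ∈ Ici a, |f x| ≤ M ∧ |f' x| ≤ M ∧ |f'' x| ≤ M) :
    (fun h : ℝ => (∫ u in Ioi a, (1 / h) * K ((a + c * h - u) / h) * f u)
        - f (a + c * h) * (∫ t in Icc (-1) c, K t)
        + h * f' (a + c * h) * (∫ t in Icc (-1) c, t * K t)) =O[𝓝[>] 0] fun h => h ^ 2 := by
  refine isBigO_iff.2 ⟨M * ∫ t in Icc (-1) c, |K t|, ?_⟩
  filter_upwards [self_mem_nhdsWithin] with h hh
  rw [Real.norm_eq_abs, norm_pow, Real.norm_eq_abs, sq_abs]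
  exact kde_remainder_le hc hK_supp hK_int hf' hf'' hM hh

theorem kde_bias_tendsto (hc : c ∈ Ico 0 1)
    (hK_supp : ∀ t, t ∉ Icc (-1 : ℝ) 1 → K t = 0) (hK_int : Integrable K)
    (hf' : ∀ x ∈ Ici a, HasDerivWithinAt f (f' x) (Ici a) x)
    (hf'' : ∀ x ∈ Ici a, HasDerivWithinAt f' (f'' x) (Ici a) x)
    (hM : ∀ x ∈ Ici a, |f x| ≤ M ∧ |f' x| ≤ M ∧ |f'' x| ≤ M) :
    Tendsto (fun h : ℝ => (∫ u in Ioi a, (1 / h) * K ((a + c * h - u) / h) * f u) - f (a + c * h))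
      (𝓝[>] 0) (𝓝 (f a * ((∫ t in Icc (-1) c, K t) - 1))) := by
  set F := ∫ t in Icc (-1) c, K t
  set μ₁ := ∫ t in Icc (-1) c, t * K t
  have hx : Tendsto (fun h : ℝ => a + c * h) (𝓝[>] 0) (𝓝[Ici a] a) := by
    refine tendsto_nhdsWithin_iff.2 ⟨?_, ?_⟩
    · exact tendsto_nhdsWithin_of_tendsto_nhds
        ((continuous_const.add (continuous_const.mul continuous_id)).tendsto' 0 a (by simp))
    · filter_upwards [self_mem_nhdsWithin] with h hh
      simp only [mem_Ici]; nlinarith [hc.1, mem_Ioi.1 hh]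
  have hfx : Tendsto (fun h => f (a + c * h)) (𝓝[>] 0) (𝓝 (f a)) :=
    (hf' a self_mem_Ici).continuousWithinAt.tendsto.comp hx
  have hrem := (kde_expansion_isBigO hc hK_supp hK_int hf' hf'' hM).trans_tendsto
    (tendsto_nhdsWithin_of_tendsto_nhds (by simpa using (continuous_pow 2).tendsto (0 : ℝ)))
  have hlin : Tendsto (fun h => h * f' (a + c * h)) (𝓝[>] 0) (𝓝 0) := by
    refine (tendsto_nhdsWithin_of_tendsto_nhds tendsto_id).zero_mul_isBoundedUnder_le
      ⟨M, eventually_map.2 (hx.eventually self_mem_nhdsWithin |>.mono fun h hh => ?_)⟩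
    exact (Real.norm_eq_abs _).trans_le (hM _ hh).2.1
  convert (hrem.add (hfx.mul_const (F - 1))).sub (hlin.mul_const μ₁) using 1
  · ext h; ring
  · simp

end KernelDensity

theorem stmt19_general (a c : ℝ) (hc : c ∈ Set.Ico (0 : ℝ) 1)
    (K : ℝ → ℝ)
    (hK_supp : ∀ t, t ∉ Set.Icc (-1 : ℝ) 1 → K t = 0)
    (hK_int : Integrable K)
    (f f' f'' : ℝ → ℝ)
    (hf' : ∀ x ∈ Set.Ici a, HasDerivWithinAt f (f' x) (Set.Ici a) x)
    (hf'' : ∀ x ∈ Set.Ici a, HasDerivWithinAt f' (f'' x) (Set.Ici a) x)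
    (hbdd : ∃ M, ∀ x ∈ Set.Ici a, |f x| ≤ M ∧ |f' x| ≤ M ∧ |f'' x| ≤ M) :
    ((fun h : ℝ =>
        (∫ u in Set.Ioi a, (1 / h) * K ((a + c * h - u) / h) * f u)
          - f (a + c * h) * (∫ t in Set.Icc (-1 : ℝ) c, K t)
          + h * f' (a + c * h) * (∫ t in Set.Icc (-1 : ℝ) c, t * K t))
      =O[nhdsWithin 0 (Set.Ioi 0)] fun h : ℝ => h ^ 2) ∧
    ((∫ t in Set.Icc (-1 : ℝ) c, K t) < 1 → f a ≠ 0 →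
      ¬ Tendsto
          (fun h : ℝ =>
            (∫ u in Set.Ioi a, (1 / h) * K ((a + c * h - u) / h) * f u)
              - f (a + c * h))
          (nhdsWithin 0 (Set.Ioi 0)) (nhds 0)) := by
  obtain ⟨M, hM⟩ := hbdd
  refine ⟨kde_expansion_isBigO hc hK_supp hK_int hf' hf'' hM, fun hF hfa hbias => ?_⟩
  have hlim := tendsto_nhds_unique hbias (kde_bias_tendsto hc hK_supp hK_int hf' hf'' hM)
  exact mul_ne_zero hfa (sub_ne_zero.2 hF.ne) hlim.symm

/-- Boundary bias of KDE. Let `K` be a symmetric density supported on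
`[-1,1]` with zero first moment, and let `f` be a density supported on `[a, ∞)` that is
C² on `[a, ∞)` (with one-sided derivatives `f'`, `f''`) with `f, f', f''` bounded. For
`x = a + c·h` with fixed `c ∈ [0,1)`, the KDE expectation
`E[(1/h)K((x-X)/h)] = ∫_a^∞ (1/h)K((x-u)/h) f(u) du` satisfies
`E = f(x)·F_K(c) - h·f'(x)·μ₁⁻(K;c) + O(h²)` as `h → 0⁺`, where
`F_K(c) = ∫_{-1}^c K` and `μ₁⁻(K;c) = ∫_{-1}^c t·K(t) dt`; in particular, if
`F_K(c) < 1` and `f(a) ≠ 0`, the bias `E - f(x)` does not vanish as `h → 0⁺`. -/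
theorem stmt19 (a c : ℝ) (hc : c ∈ Set.Ico (0 : ℝ) 1)
    (K : ℝ → ℝ) (hK_meas : Measurable K) (hK_nonneg : ∀ t, 0 ≤ K t)
    (hK_symm : ∀ t, K (-t) = K t)
    (hK_supp : ∀ t, t ∉ Set.Icc (-1 : ℝ) 1 → K t = 0)
    (hK_int : Integrable K) (hK_norm : ∫ t, K t = 1)
    (hK_mom1 : ∫ t, t * K t = 0)
    (f f' f'' : ℝ → ℝ) (hf_meas : Measurable f) (hf_nonneg : ∀ u, 0 ≤ f u)
    (hf_int : Integrable f) (hf_norm : ∫ u, f u = 1)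
    (hf_supp : ∀ u, u < a → f u = 0)
    (hf' : ∀ x ∈ Set.Ici a, HasDerivWithinAt f (f' x) (Set.Ici a) x)
    (hf'' : ∀ x ∈ Set.Ici a, HasDerivWithinAt f' (f'' x) (Set.Ici a) x)
    (hf''_cont : ContinuousOn f'' (Set.Ici a))
    (hbdd : ∃ M, ∀ x ∈ Set.Ici a, |f x| ≤ M ∧ |f' x| ≤ M ∧ |f'' x| ≤ M) :
    ((fun h : ℝ =>
        (∫ u in Set.Ioi a, (1 / h) * K ((a + c * h - u) / h) * f u)
          - f (a + c * h) * (∫ t in Set.Icc (-1 : ℝ) c, K t)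
          + h * f' (a + c * h) * (∫ t in Set.Icc (-1 : ℝ) c, t * K t))
      =O[nhdsWithin 0 (Set.Ioi 0)] fun h : ℝ => h ^ 2) ∧
    ((∫ t in Set.Icc (-1 : ℝ) c, K t) < 1 → f a ≠ 0 →
      ¬ Tendsto
          (fun h : ℝ =>
            (∫ u in Set.Ioi a, (1 / h) * K ((a + c * h - u) / h) * f u)
              - f (a + c * h))
          (nhdsWithin 0 (Set.Ioi 0)) (nhds 0)) :=
  stmt19_general a c hc K hK_supp hK_int f f' f'' hf' hf'' hbdd
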